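/- Let V be a left K-vector space over a division ring K with finrank V = 4. For all lines a₁, b₁, c₁, a₂, b₂, c₂ of V the following are equivalent: (i) for every line g there exist lines x₁, x₂ such that for each i ∈ {1,2}: xᵢ ≃ aᵢ, xᵢ ≃ bᵢ, xᵢ ≃ cᵢ and (aᵢ,bᵢ,cᵢ) is a T-triple; and for some i ∈ {1,2}: g = xᵢ, or (aᵢ,bᵢ,cᵢ) and (g,x₁,x₂) are T-triples of the same type; (ii) (a₁,b₁,c₁) and (a₂,b₂,c₂) are T-triples of opposite type, i.e. one is a triangle and the other a tripod. -/
import Mathlib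


/-- `a` is a projective line: a submodule of finrank 2. -/
def PLine {K V : Type*} [DivisionRing K] [AddCommGroup V] [Module K V]
    (a : Submodule K V) : Prop := Module.finrank K a = 2

/-- `p` is a projective point: a submodule of finrank 1. -/
def PPoint {K V : Type*} [DivisionRing K] [AddCommGroup V] [Module K V]
    (p : Submodule K V) : Prop := Module.finrank K p = 1

/-- Two lines intersect: they are different and have nontrivial intersection. -/
def PMeets {K V : Type*} [DivisionRing K] [AddCommGroup V] [Module K V]
    (a b : Submodule K V) : Prop := a ≠ b ∧ a ⊓ b ≠ ⊥

/-- `a ≃ b`: the lines intersect or coincide. -/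
def PMeetsOrEq {K V : Type*} [DivisionRing K] [AddCommGroup V] [Module K V]
    (a b : Submodule K V) : Prop := PMeets a b ∨ a = b

/-- The three lines `a, b, c` pass through a common point. -/
def PConcurrent3 {K V : Type*} [DivisionRing K] [AddCommGroup V] [Module K V]
    (a b c : Submodule K V) : Prop :=
  ∃ p : Submodule K V, PPoint p ∧ p ≤ a ∧ p ≤ b ∧ p ≤ c

/-- `(a,b,c)` is a triangle (trilateral): pairwise distinct, pairwise intersecting,
not concurrent lines. -/
def Triangle {K V : Type*} [DivisionRing K] [AddCommGroup V] [Module K V]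
    (a b c : Submodule K V) : Prop :=
  a ≠ b ∧ a ≠ c ∧ b ≠ c ∧ PMeets a b ∧ PMeets a c ∧ PMeets b c ∧ ¬ PConcurrent3 a b c

/-- `(a,b,c)` is a tripod: pairwise distinct concurrent lines not lying in a common plane. -/
def Tripod {K V : Type*} [DivisionRing K] [AddCommGroup V] [Module K V]
    (a b c : Submodule K V) : Prop :=
  a ≠ b ∧ a ≠ c ∧ b ≠ c ∧ PConcurrent3 a b c ∧ a ⊔ b ⊔ c = ⊤

/-- A T-triple is a triangle or a tripod. -/
def TTriple {K V : Type*} [DivisionRing K] [AddCommGroup V] [Module K V]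
    (a b c : Submodule K V) : Prop := Triangle a b c ∨ Tripod a b c

/-- Two T-triples are of the same type. -/
def SameType {K V : Type*} [DivisionRing K] [AddCommGroup V] [Module K V]
    (a b c a' b' c' : Submodule K V) : Prop :=
  (Triangle a b c ∧ Triangle a' b' c') ∨ (Tripod a b c ∧ Tripod a' b' c')

/-- Two T-triples are of opposite type. -/
def OppType {K V : Type*} [DivisionRing K] [AddCommGroup V] [Module K V]
    (a b c a' b' c' : Submodule K V) : Prop :=
  (Triangle a b c ∧ Tripod a' b' c') ∨ (Tripod a b c ∧ Triangle a' b' c')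

set_option linter.unusedSectionVars false
set_option linter.unusedVariables false
open Module Submodule

section Helpers
variable {K V : Type*} [DivisionRing K] [AddCommGroup V] [Module K V]

section FD
variable [FiniteDimensional K V]

lemma frk_formula (s t : Submodule K V) :
    finrank K ↥(s ⊔ t) + finrank K ↥(s ⊓ t) = finrank K s + finrank K t :=
  Submodule.finrank_sup_add_finrank_inf_eq s t

lemma ne_bot_iff_frk (s : Submodule K V) : s ≠ ⊥ ↔ 1 ≤ finrank K s := by
  rw [Ne, ← Submodule.finrank_eq_zero (R := K) (M := V)]
  omega

lemma point_ne_bot {p : Submodule K V} (hp : PPoint p) : p ≠ ⊥ := by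
  rw [ne_bot_iff_frk, hp]

lemma ne_bot_of_point_le {p s : Submodule K V} (hp : PPoint p) (h : p ≤ s) : s ≠ ⊥ := by
  rw [ne_bot_iff_frk]
  calc 1 = finrank K p := hp.symm
  _ ≤ finrank K s := Submodule.finrank_mono h

lemma point_le_point {p q : Submodule K V} (hp : PPoint p) (hq : PPoint q) (h : p ≤ q) :
    p = q := Submodule.eq_of_le_of_finrank_eq h (by rw [hp, hq])

lemma point_inf_eq_bot {p x : Submodule K V} (hp : PPoint p) (h : ¬ p ≤ x) : p ⊓ x = ⊥ := by
  by_contra hne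
  have h1 : 1 ≤ finrank K ↥(p ⊓ x) := (ne_bot_iff_frk _).1 hne
  have h2 : finrank K ↥(p ⊓ x) ≤ finrank K p := Submodule.finrank_mono inf_le_left
  have : p ⊓ x = p := by
    apply Submodule.eq_of_le_of_finrank_eq inf_le_left
    rw [hp] at h2 ⊢; omega
  exact h (this ▸ inf_le_right)

lemma exists_point_le_notle {s t : Submodule K V} (h : ¬ s ≤ t) :
    ∃ p : Submodule K V, PPoint p ∧ p ≤ s ∧ ¬ p ≤ t := by
  obtain ⟨u, hus, hut⟩ := SetLike.not_le_iff_exists.1 h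
  have hu0 : u ≠ 0 := fun h0 => hut (h0 ▸ t.zero_mem)
  refine ⟨Submodule.span K {u}, finrank_span_singleton hu0, ?_, ?_⟩
  · exact (Submodule.span_singleton_le_iff_mem u s).2 hus
  · intro hle
    exact hut (hle (Submodule.mem_span_singleton_self u))

lemma exists_point_le {s : Submodule K V} (h : s ≠ ⊥) :
    ∃ p : Submodule K V, PPoint p ∧ p ≤ s := by
  obtain ⟨p, hp, hps, _⟩ := exists_point_le_notle (t := ⊥) (by simpa using h)
  exact ⟨p, hp, hps⟩

lemma frk_sup_points {p q : Submodule K V} (hp : PPoint p) (hq : PPoint q) (h : p ≠ q) :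
    finrank K ↥(p ⊔ q) = 2 := by
  have hle : ¬ p ≤ q := fun hle => h (point_le_point hp hq hle)
  have := frk_formula p q
  rw [point_inf_eq_bot hp hle] at this
  simp [finrank_bot] at this
  rw [this, hp, hq]

lemma frk_sup_point_line {p g : Submodule K V} (hp : PPoint p) (hg : PLine g)
    (h : ¬ p ≤ g) : finrank K ↥(p ⊔ g) = 3 := by
  have := frk_formula p g
  rw [point_inf_eq_bot hp h] at this
  simp [finrank_bot] at this
  rw [this, hp, hg]

/-- Two distinct lines inside a plane (finrank-3 submodule) meet. -/
lemma lines_in_plane_meet {x y P : Submodule K V} (hx : PLine x) (hy : PLine y)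
    (hxy : x ≠ y) (hxP : x ≤ P) (hyP : y ≤ P) (hP : finrank K P = 3) :
    x ⊓ y ≠ ⊥ := by
  have hsup : finrank K ↥(x ⊔ y) ≤ 3 := hP ▸ Submodule.finrank_mono (sup_le hxP hyP)
  have := frk_formula x y
  rw [ne_bot_iff_frk]
  rw [hx, hy] at this
  omega

lemma meets_of_point_le {p x y : Submodule K V} (hp : PPoint p) (hpx : p ≤ x) (hpy : p ≤ y) :
    PMeetsOrEq x y := by
  by_cases h : x = y
  · exact Or.inr h
  · exact Or.inl ⟨h, ne_bot_of_point_le hp (le_inf hpx hpy)⟩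

lemma meets_of_plane {x y P : Submodule K V} (hx : PLine x) (hy : PLine y)
    (hxP : x ≤ P) (hyP : y ≤ P) (hP : finrank K P = 3) : PMeetsOrEq x y := by
  by_cases h : x = y
  · exact Or.inr h
  · exact Or.inl ⟨h, lines_in_plane_meet hx hy h hxP hyP hP⟩

end FD
end Helpers
section Helpers2
open Module Submodule
variable {K V : Type*} [DivisionRing K] [AddCommGroup V] [Module K V]
variable [FiniteDimensional K V]

/-- Two distinct meeting lines: their inf is a point. -/
lemma inf_of_meets {a b : Submodule K V} (ha : PLine a) (hb : PLine b)
    (h : PMeets a b) : PPoint (a ⊓ b) := by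
  have h1 : 1 ≤ finrank K ↥(a ⊓ b) := (ne_bot_iff_frk _).1 h.2
  have h2 : finrank K ↥(a ⊓ b) ≤ 2 := by
    have := Submodule.finrank_mono (inf_le_left : a ⊓ b ≤ a)
    rw [ha] at this; exact this
  have h3 : finrank K ↥(a ⊓ b) ≠ 2 := by
    intro he
    have hab : a ⊓ b = a := Submodule.eq_of_le_of_finrank_eq inf_le_left (by rw [he, ha])
    exact h.1 (Submodule.eq_of_le_of_finrank_eq (hab ▸ inf_le_right) (by rw [ha, hb]))
  show finrank K ↥(a ⊓ b) = 1
  omega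

/-- Two distinct meeting lines span a plane. -/
lemma sup_of_meets {a b : Submodule K V} (ha : PLine a) (hb : PLine b)
    (h : PMeets a b) : finrank K ↥(a ⊔ b) = 3 := by
  have := frk_formula a b
  have hp : finrank K ↥(a ⊓ b) = 1 := inf_of_meets ha hb h
  rw [ha, hb, hp] at this; omega

/-- The plane of a triangle contains the third side. -/
lemma triangle_plane {a b c : Submodule K V} (ha : PLine a) (hb : PLine b) (hc : PLine c)
    (h : Triangle a b c) : finrank K ↥(a ⊔ b) = 3 ∧ c ≤ a ⊔ b := by
  obtain ⟨hab, hac, hbc, mab, mac, mbc, hnc⟩ := h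
  refine ⟨sup_of_meets ha hb mab, ?_⟩
  have hq1 : PPoint (c ⊓ a) := by
    have := inf_of_meets ha hc mac
    rwa [inf_comm] at this
  have hq2 : PPoint (c ⊓ b) := by
    have := inf_of_meets hb hc mbc
    rwa [inf_comm] at this
  have hne : c ⊓ a ≠ c ⊓ b := by
    intro he
    exact hnc ⟨c ⊓ a, hq1, inf_le_right, he ▸ inf_le_right, inf_le_left⟩
  have hsup : finrank K ↥((c ⊓ a) ⊔ (c ⊓ b)) = 2 := frk_sup_points hq1 hq2 hne
  have hce : (c ⊓ a) ⊔ (c ⊓ b) = c :=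
    Submodule.eq_of_le_of_finrank_eq (sup_le inf_le_left inf_le_left) (by rw [hsup, hc])
  calc c = (c ⊓ a) ⊔ (c ⊓ b) := hce.symm
  _ ≤ a ⊔ b := sup_le (le_sup_left.trans' inf_le_right) (le_sup_right.trans' inf_le_right)

variable (hdim : Module.finrank K V = 4)
include hdim

/-- A line not inside a plane meets it in a point. -/
lemma line_inf_plane {g E : Submodule K V} (hg : PLine g) (hE : finrank K E = 3)
    (h : ¬ g ≤ E) : finrank K ↥(g ⊓ E) = 1 := by
  have hlt : E < g ⊔ E := lt_of_le_of_ne le_sup_right (fun he => h (he ▸ le_sup_left))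
  have h4 : finrank K ↥(g ⊔ E) = 4 := by
    have h1 : finrank K E < finrank K ↥(g ⊔ E) := Submodule.finrank_lt_finrank_of_lt hlt
    have h2 : finrank K ↥(g ⊔ E) ≤ 4 := hdim ▸ Submodule.finrank_le _
    omega
  have := frk_formula g E
  rw [hg, hE, h4] at this; omega

/-- A line meeting (or equal to) all three sides of a triangle lies in its plane. -/
lemma le_plane_of_meets_triangle {a b c x : Submodule K V}
    (ha : PLine a) (hb : PLine b) (hc : PLine c) (hx : PLine x)
    (h : Triangle a b c) (h1 : PMeetsOrEq x a) (h2 : PMeetsOrEq x b) (h3 : PMeetsOrEq x c) :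
    x ≤ a ⊔ b := by
  obtain ⟨hE, hcE⟩ := triangle_plane ha hb hc h
  rcases h1 with h1 | rfl
  rcases h2 with h2 | rfl
  rcases h3 with h3 | rfl
  · by_contra hxE
    have hq : finrank K ↥(x ⊓ (a ⊔ b)) = 1 := line_inf_plane hdim hx hE hxE
    have key : ∀ y : Submodule K V, y ≤ a ⊔ b → PMeets x y → (x ⊓ (a ⊔ b)) ≤ y := by
      intro y hyE hm
      have hle : x ⊓ y ≤ x ⊓ (a ⊔ b) := inf_le_inf_left x hyE
      have : x ⊓ y = x ⊓ (a ⊔ b) := by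
        apply Submodule.eq_of_le_of_finrank_eq hle
        have g1 : 1 ≤ finrank K ↥(x ⊓ y) := (ne_bot_iff_frk _).1 hm.2
        have g2 : finrank K ↥(x ⊓ y) ≤ finrank K ↥(x ⊓ (a ⊔ b)) := Submodule.finrank_mono hle
        omega
      exact this ▸ inf_le_right
    exact h.2.2.2.2.2.2 ⟨x ⊓ (a ⊔ b), hq, key a le_sup_left h1, key b le_sup_right h2,
      key c hcE h3⟩
  · exact hcE
  · exact le_sup_right
  · exact le_sup_left

/-- A line meeting (or equal to) all three legs of a tripod contains its vertex. -/
lemma vertex_le_of_meets_tripod {a b c x p : Submodule K V}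
    (ha : PLine a) (hb : PLine b) (hc : PLine c) (hx : PLine x)
    (h : Tripod a b c) (hp : PPoint p) (hpa : p ≤ a) (hpb : p ≤ b) (hpc : p ≤ c)
    (h1 : PMeetsOrEq x a) (h2 : PMeetsOrEq x b) (h3 : PMeetsOrEq x c) :
    p ≤ x := by
  rcases h1 with h1 | rfl
  rcases h2 with h2 | rfl
  rcases h3 with h3 | rfl
  · by_contra hpx
    have key : ∀ y : Submodule K V, PLine y → p ≤ y → PMeets x y → y ≤ p ⊔ x := by
      intro y hy hpy hm
      have hq : PPoint (x ⊓ y) := inf_of_meets hx hy hm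
      have hqp : x ⊓ y ≠ p := by
        intro he
        exact hpx (he ▸ inf_le_left)
      have : p ⊔ (x ⊓ y) = y := by
        apply Submodule.eq_of_le_of_finrank_eq (sup_le hpy inf_le_right)
        rw [frk_sup_points hp hq (fun he => hqp he.symm), hy]
      calc y = p ⊔ (x ⊓ y) := this.symm
      _ ≤ p ⊔ x := sup_le le_sup_left (le_sup_right.trans' inf_le_left)
    have htop : (⊤ : Submodule K V) ≤ p ⊔ x := by
      rw [← h.2.2.2.2]
      exact sup_le (sup_le (key a ha hpa h1) (key b hb hpb h2)) (key c hc hpc h3)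
    have : finrank K V ≤ finrank K ↥(p ⊔ x) := by
      calc finrank K V = finrank K ↥(⊤ : Submodule K V) := finrank_top K V |>.symm
      _ ≤ finrank K ↥(p ⊔ x) := Submodule.finrank_mono htop
    rw [hdim, frk_sup_point_line hp hx hpx] at this
    omega
  · exact hpc
  · exact hpb
  · exact hpa

end Helpers2
section Helpers3
open Module Submodule
variable {K V : Type*} [DivisionRing K] [AddCommGroup V] [Module K V]
variable [FiniteDimensional K V]

/-- A submodule is not covered by two submodules not containing it. -/
lemma exists_mem_notmem_two {P s t : Submodule K V} (hs : ¬ P ≤ s) (ht : ¬ P ≤ t) :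
    ∃ v, v ∈ P ∧ v ∉ s ∧ v ∉ t := by
  obtain ⟨v, hvP, hvs⟩ := SetLike.not_le_iff_exists.1 hs
  obtain ⟨w, hwP, hwt⟩ := SetLike.not_le_iff_exists.1 ht
  by_cases hvt : v ∈ t
  · by_cases hws : w ∈ s
    · refine ⟨v + w, P.add_mem hvP hwP, ?_, ?_⟩
      · intro h
        exact hvs (by simpa using s.sub_mem h hws)
      · intro h
        exact hwt (by simpa using t.sub_mem h hvt)
    · exact ⟨w, hwP, hws, hwt⟩
  · exact ⟨v, hvP, hvs, hvt⟩

variable (hdim : Module.finrank K V = 4)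
include hdim

lemma exists_step {W : Submodule K V} (h : finrank K W < 4) :
    ∃ W' : Submodule K V, W ≤ W' ∧ finrank K W' = finrank K W + 1 := by
  have hW : ¬ (⊤ : Submodule K V) ≤ W := by
    intro hle
    have : W = ⊤ := top_le_iff.1 hle
    rw [this, finrank_top, hdim] at h
    omega
  obtain ⟨p, hp, -, hpW⟩ := exists_point_le_notle hW
  refine ⟨W ⊔ p, le_sup_left, ?_⟩
  have := frk_formula W p
  rw [inf_comm, point_inf_eq_bot hp hpW] at this
  simp [finrank_bot] at this
  rw [this, hp]

/-- Every submodule of finrank ≤ 2 is contained in a plane. -/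
lemma exists_superplane {W : Submodule K V} (h : finrank K W ≤ 2) :
    ∃ P : Submodule K V, W ≤ P ∧ finrank K P = 3 := by
  obtain ⟨W₁, hle₁, hr₁⟩ := exists_step hdim (W := W) (by omega)
  by_cases h2 : finrank K W₁ = 3
  · exact ⟨W₁, hle₁, h2⟩
  · obtain ⟨W₂, hle₂, hr₂⟩ := exists_step hdim (W := W₁) (by omega)
    by_cases h3 : finrank K W₂ = 3
    · exact ⟨W₂, hle₁.trans hle₂, h3⟩
    · obtain ⟨W₃, hle₃, hr₃⟩ := exists_step hdim (W := W₂) (by omega)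
      exact ⟨W₃, (hle₁.trans hle₂).trans hle₃, by omega⟩

/-- Core construction: a triangle through `g` with one side in the plane `E = a ⊔ b`
and one side through the point `p`. -/
lemma exists_triangle_witness {a b c p g : Submodule K V}
    (ha : PLine a) (hb : PLine b) (hc : PLine c) (htri : Triangle a b c)
    (hp : PPoint p) (hg : PLine g) (hgE : ¬ g ≤ a ⊔ b) (hpg : ¬ p ≤ g) :
    ∃ x y : Submodule K V, PLine x ∧ PLine y ∧ x ≤ a ⊔ b ∧ p ≤ y ∧ Triangle g x y := by
  set E := a ⊔ b with hEdef
  obtain ⟨hE, -⟩ := triangle_plane ha hb hc htri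
  set F := p ⊔ g with hFdef
  have hF : finrank K F = 3 := frk_sup_point_line hp hg hpg
  -- x := F ⊓ E is a line
  set x := F ⊓ E with hxdef
  have hFE : finrank K ↥(F ⊔ E) = 4 := by
    have hlt : E < F ⊔ E := by
      refine lt_of_le_of_ne le_sup_right (fun he => hgE ?_)
      calc g ≤ F := le_sup_right
      _ ≤ F ⊔ E := le_sup_left
      _ = E := he.symm
    have h1 : finrank K E < finrank K ↥(F ⊔ E) := Submodule.finrank_lt_finrank_of_lt hlt
    have h2 : finrank K ↥(F ⊔ E) ≤ 4 := hdim ▸ Submodule.finrank_le _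
    rw [hE] at h1; omega
  have hx : PLine x := by
    have := frk_formula F E
    rw [hF, hE, hFE] at this
    show finrank K ↥(F ⊓ E) = 2
    omega
  -- q := g ⊓ E is a point
  set q := g ⊓ E with hqdef
  have hq : PPoint q := line_inf_plane hdim hg hE hgE
  have hgx : g ⊓ x = q :=
    le_antisymm (le_inf inf_le_left (inf_le_right.trans inf_le_right))
      (le_inf inf_le_left (le_inf (inf_le_left.trans le_sup_right) inf_le_right))
  -- r : a point on g different from q
  have hgq : ¬ g ≤ q := by
    intro hle
    have := Submodule.finrank_mono hle
    rw [hg, hq] at this; omega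
  obtain ⟨r, hr, hrg, hrq⟩ := exists_point_le_notle hgq
  have hrq' : r ≠ q := fun he => hrq (he ▸ le_rfl)
  -- y := p ⊔ r
  set y := p ⊔ r with hydef
  have hpr : p ≠ r := by
    intro he
    exact hpg (he ▸ hrg)
  have hy : PLine y := frk_sup_points hp hr hpr
  have hyF : y ≤ F := sup_le le_sup_left (hrg.trans le_sup_right)
  -- distinctness
  have hgne_x : g ≠ x := by
    intro he
    exact hgE (he ▸ (inf_le_right : F ⊓ E ≤ E))
  have hgne_y : g ≠ y := by
    intro he
    exact hpg (he ▸ (le_sup_left : p ≤ y))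
  have hxne_y : x ≠ y := by
    intro he
    have : r ≤ g ⊓ x := le_inf hrg (he ▸ (le_sup_right : r ≤ y))
    rw [hgx] at this
    exact hrq this
  refine ⟨x, y, hx, hy, inf_le_right, le_sup_left, ?_⟩
  have hqle_g : q ≤ g := inf_le_left
  refine ⟨hgne_x, hgne_y, hxne_y, ⟨hgne_x, ?_⟩, ⟨hgne_y, ?_⟩, ⟨hxne_y, ?_⟩, ?_⟩
  · rw [hgx]
    exact point_ne_bot hq
  · exact ne_bot_of_point_le hr (le_inf hrg le_sup_right)
  · exact lines_in_plane_meet hx hy hxne_y inf_le_left hyF hF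
  · rintro ⟨t, ht, htg, htx, hty⟩
    have htq : t = q := point_le_point ht hq (le_inf htg htx |>.trans hgx.le)
    have hqy : q ≤ y := htq ▸ hty
    have hqr : finrank K ↥(q ⊔ r) = 2 := frk_sup_points hq hr (fun he => hrq' he.symm)
    have hgqr : q ⊔ r = g :=
      Submodule.eq_of_le_of_finrank_eq (sup_le hqle_g hrg) (by rw [hqr, hg])
    have hgy : g ≤ y := hgqr ▸ sup_le hqy le_sup_right
    exact hgne_y (Submodule.eq_of_le_of_finrank_eq hgy (by rw [hg, hy]))

end Helpers3

section Helpers4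
open Module Submodule
variable {K V : Type*} [DivisionRing K] [AddCommGroup V] [Module K V]

lemma PMeets.symm {a b : Submodule K V} (h : PMeets a b) : PMeets b a :=
  ⟨h.1.symm, by rw [inf_comm b a]; exact h.2⟩

lemma Triangle.swap {a b c : Submodule K V} (h : Triangle a b c) : Triangle a c b := by
  obtain ⟨h1, h2, h3, m1, m2, m3, hnc⟩ := h
  exact ⟨h2, h1, fun he => h3 he.symm, m2, m1, m3.symm, fun ⟨t, ht, hta, htc, htb⟩ =>
    hnc ⟨t, ht, hta, htb, htc⟩⟩

lemma not_tripod_of_triangle {a b c : Submodule K V} (h : Triangle a b c) :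
    ¬ Tripod a b c := fun ht => h.2.2.2.2.2.2 ht.2.2.2.1

end Helpers4
section MainLemmas
open Module Submodule
variable {K V : Type*} [DivisionRing K] [AddCommGroup V] [Module K V]
variable [FiniteDimensional K V]
variable (hdim : Module.finrank K V = 4)
include hdim

lemma no_both_triangles {a₁ b₁ c₁ a₂ b₂ c₂ : Submodule K V}
    (ha₁ : PLine a₁) (hb₁ : PLine b₁) (hc₁ : PLine c₁)
    (ha₂ : PLine a₂) (hb₂ : PLine b₂) (hc₂ : PLine c₂)
    (t1 : Triangle a₁ b₁ c₁) (t2 : Triangle a₂ b₂ c₂)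
    (hi : ∀ g : Submodule K V, PLine g →
      ∃ x₁ x₂ : Submodule K V, PLine x₁ ∧ PLine x₂ ∧
        (PMeetsOrEq x₁ a₁ ∧ PMeetsOrEq x₁ b₁ ∧ PMeetsOrEq x₁ c₁ ∧ TTriple a₁ b₁ c₁) ∧
        (PMeetsOrEq x₂ a₂ ∧ PMeetsOrEq x₂ b₂ ∧ PMeetsOrEq x₂ c₂ ∧ TTriple a₂ b₂ c₂) ∧
        ((g = x₁ ∨ SameType a₁ b₁ c₁ g x₁ x₂) ∨ (g = x₂ ∨ SameType a₂ b₂ c₂ g x₁ x₂))) :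
    False := by
  set E₁ := a₁ ⊔ b₁ with hE₁def
  set E₂ := a₂ ⊔ b₂ with hE₂def
  obtain ⟨hE₁, -⟩ := triangle_plane ha₁ hb₁ hc₁ t1
  obtain ⟨hE₂, -⟩ := triangle_plane ha₂ hb₂ hc₂ t2
  -- a point in E₁ ⊓ E₂
  have hIne : E₁ ⊓ E₂ ≠ ⊥ := by
    rw [ne_bot_iff_frk]
    have := frk_formula E₁ E₂
    have hle : finrank K ↥(E₁ ⊔ E₂) ≤ 4 := hdim ▸ Submodule.finrank_le _
    rw [hE₁, hE₂] at this
    omega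
  obtain ⟨s, hs, hsI⟩ := exists_point_le hIne
  -- a vector outside both planes
  have hnt₁ : ¬ (⊤ : Submodule K V) ≤ E₁ := by
    intro h
    have : finrank K V ≤ finrank K E₁ := by
      calc finrank K V = finrank K ↥(⊤ : Submodule K V) := (finrank_top K V).symm
      _ ≤ finrank K E₁ := Submodule.finrank_mono h
    rw [hdim, hE₁] at this; omega
  have hnt₂ : ¬ (⊤ : Submodule K V) ≤ E₂ := by
    intro h
    have : finrank K V ≤ finrank K E₂ := by
      calc finrank K V = finrank K ↥(⊤ : Submodule K V) := (finrank_top K V).symm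
      _ ≤ finrank K E₂ := Submodule.finrank_mono h
    rw [hdim, hE₂] at this; omega
  obtain ⟨w, -, hw₁, hw₂⟩ := exists_mem_notmem_two hnt₁ hnt₂
  have hw0 : w ≠ 0 := fun h0 => hw₁ (h0 ▸ E₁.zero_mem)
  set sw := Submodule.span K {w} with hswdef
  have hsw : PPoint sw := finrank_span_singleton hw0
  have hwsw : w ∈ sw := Submodule.mem_span_singleton_self w
  have hssw : s ≠ sw := by
    intro he
    exact hw₁ ((hsI.trans inf_le_left) (he ▸ hwsw))
  set g := s ⊔ sw with hgdef
  have hg : PLine g := frk_sup_points hs hsw hssw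
  have hwg : w ∈ g := le_sup_right (α := Submodule K V) hwsw
  have hgE₁ : ¬ g ≤ E₁ := fun h => hw₁ (h hwg)
  have hgE₂ : ¬ g ≤ E₂ := fun h => hw₂ (h hwg)
  have hsg : s ≤ g := le_sup_left
  -- apply the hypothesis
  obtain ⟨x₁, x₂, hlx₁, hlx₂, ⟨m1a, m1b, m1c, -⟩, ⟨m2a, m2b, m2c, -⟩, hdisj⟩ := hi g hg
  have hx₁E : x₁ ≤ E₁ := le_plane_of_meets_triangle hdim ha₁ hb₁ hc₁ hlx₁ t1 m1a m1b m1c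
  have hx₂E : x₂ ≤ E₂ := le_plane_of_meets_triangle hdim ha₂ hb₂ hc₂ hlx₂ t2 m2a m2b m2c
  have hq₁ : PPoint (g ⊓ E₁) := line_inf_plane hdim hg hE₁ hgE₁
  have hq₂ : PPoint (g ⊓ E₂) := line_inf_plane hdim hg hE₂ hgE₂
  have hs₁ : s = g ⊓ E₁ := point_le_point hs hq₁ (le_inf hsg (hsI.trans inf_le_left))
  have hs₂ : s = g ⊓ E₂ := point_le_point hs hq₂ (le_inf hsg (hsI.trans inf_le_right))
  have hcon : ¬ Triangle g x₁ x₂ := by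
    rintro ⟨-, -, -, mgx₁, mgx₂, -, hnc⟩
    have key : ∀ x E : Submodule K V, x ≤ E → PPoint (g ⊓ E) → s = g ⊓ E → PMeets g x →
        s ≤ x := by
      intro x E hxE hqE hsE hm
      have hle : g ⊓ x ≤ g ⊓ E := inf_le_inf_left g hxE
      have heq : g ⊓ x = g ⊓ E := by
        apply Submodule.eq_of_le_of_finrank_eq hle
        have g1 : 1 ≤ finrank K ↥(g ⊓ x) := (ne_bot_iff_frk _).1 hm.2
        have g2 : finrank K ↥(g ⊓ x) ≤ finrank K ↥(g ⊓ E) := Submodule.finrank_mono hle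
        have g3 : finrank K ↥(g ⊓ E) = 1 := hqE
        omega
      rw [hsE, ← heq]
      exact inf_le_right
    exact hnc ⟨s, hs, hsg, key x₁ E₁ hx₁E hq₁ hs₁ mgx₁, key x₂ E₂ hx₂E hq₂ hs₂ mgx₂⟩
  rcases hdisj with (h | h) | (h | h)
  · exact hgE₁ (h ▸ hx₁E)
  · rcases h with ⟨-, htr⟩ | ⟨htp, -⟩
    · exact hcon htr
    · exact not_tripod_of_triangle t1 htp
  · exact hgE₂ (h ▸ hx₂E)
  · rcases h with ⟨-, htr⟩ | ⟨htp, -⟩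
    · exact hcon htr
    · exact not_tripod_of_triangle t2 htp

lemma no_both_tripods {a₁ b₁ c₁ a₂ b₂ c₂ : Submodule K V}
    (ha₁ : PLine a₁) (hb₁ : PLine b₁) (hc₁ : PLine c₁)
    (ha₂ : PLine a₂) (hb₂ : PLine b₂) (hc₂ : PLine c₂)
    (t1 : Tripod a₁ b₁ c₁) (t2 : Tripod a₂ b₂ c₂)
    (hi : ∀ g : Submodule K V, PLine g →
      ∃ x₁ x₂ : Submodule K V, PLine x₁ ∧ PLine x₂ ∧
        (PMeetsOrEq x₁ a₁ ∧ PMeetsOrEq x₁ b₁ ∧ PMeetsOrEq x₁ c₁ ∧ TTriple a₁ b₁ c₁) ∧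
        (PMeetsOrEq x₂ a₂ ∧ PMeetsOrEq x₂ b₂ ∧ PMeetsOrEq x₂ c₂ ∧ TTriple a₂ b₂ c₂) ∧
        ((g = x₁ ∨ SameType a₁ b₁ c₁ g x₁ x₂) ∨ (g = x₂ ∨ SameType a₂ b₂ c₂ g x₁ x₂))) :
    False := by
  obtain ⟨p₁, hp₁, h1a, h1b, h1c⟩ := t1.2.2.2.1
  obtain ⟨p₂, hp₂, h2a, h2b, h2c⟩ := t2.2.2.2.1
  set W := p₁ ⊔ p₂ with hWdef
  have hW : finrank K W ≤ 2 := by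
    have := frk_formula p₁ p₂
    rw [← hWdef] at this
    have h1 : finrank K p₁ = 1 := hp₁
    have h2 : finrank K p₂ = 1 := hp₂
    omega
  obtain ⟨P, hWP, hP⟩ := exists_superplane hdim hW
  have hPW : ¬ P ≤ W := by
    intro h
    have := Submodule.finrank_mono h
    rw [hP] at this; omega
  obtain ⟨u, huP, huW⟩ := SetLike.not_le_iff_exists.1 hPW
  have hu0 : u ≠ 0 := fun h0 => huW (h0 ▸ W.zero_mem)
  set su := Submodule.span K {u} with hsudef
  have hsu : PPoint su := finrank_span_singleton hu0
  have husu : u ∈ su := Submodule.mem_span_singleton_self u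
  have hfr1 : finrank K ↥(p₁ ⊔ su) ≤ 2 := by
    have := frk_formula p₁ su
    have e1 : finrank K p₁ = 1 := hp₁
    have e2 : finrank K su = 1 := hsu
    omega
  have hfr2 : finrank K ↥(p₂ ⊔ su) ≤ 2 := by
    have := frk_formula p₂ su
    have e1 : finrank K p₂ = 1 := hp₂
    have e2 : finrank K su = 1 := hsu
    omega
  have hPs : ¬ P ≤ p₁ ⊔ su := by
    intro h
    have := Submodule.finrank_mono h
    rw [hP] at this; omega
  have hPt : ¬ P ≤ p₂ ⊔ su := by
    intro h
    have := Submodule.finrank_mono h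
    rw [hP] at this; omega
  obtain ⟨v, hvP, hv₁, hv₂⟩ := exists_mem_notmem_two hPs hPt
  have hv0 : v ≠ 0 := fun h0 => hv₁ (h0 ▸ (p₁ ⊔ su).zero_mem)
  set sv := Submodule.span K {v} with hsvdef
  have hsv : PPoint sv := finrank_span_singleton hv0
  have hvsv : v ∈ sv := Submodule.mem_span_singleton_self v
  have hsusv : su ≠ sv := by
    intro he
    exact hv₁ (le_sup_right (α := Submodule K V) (he ▸ hvsv))
  set g := su ⊔ sv with hgdef
  have hg : PLine g := frk_sup_points hsu hsv hsusv
  have hgP : g ≤ P := sup_le ((Submodule.span_singleton_le_iff_mem u P).2 huP)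
    ((Submodule.span_singleton_le_iff_mem v P).2 hvP)
  have hvg : v ∈ g := le_sup_right (α := Submodule K V) hvsv
  have key_ne : ∀ p : Submodule K V, PPoint p → p ≤ W → p ≠ su := by
    intro p hp hpW he
    exact huW (hpW (he ▸ husu))
  have hp₁g : ¬ p₁ ≤ g := by
    intro h
    have hne : p₁ ≠ su := key_ne p₁ hp₁ le_sup_left
    have heq : p₁ ⊔ su = g := Submodule.eq_of_le_of_finrank_eq (sup_le h le_sup_left)
      (by rw [frk_sup_points hp₁ hsu hne, hg])
    exact hv₁ (heq.symm ▸ hvg)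
  have hp₂g : ¬ p₂ ≤ g := by
    intro h
    have hne : p₂ ≠ su := key_ne p₂ hp₂ le_sup_right
    have heq : p₂ ⊔ su = g := Submodule.eq_of_le_of_finrank_eq (sup_le h le_sup_left)
      (by rw [frk_sup_points hp₂ hsu hne, hg])
    exact hv₂ (heq.symm ▸ hvg)
  obtain ⟨x₁, x₂, hlx₁, hlx₂, ⟨m1a, m1b, m1c, -⟩, ⟨m2a, m2b, m2c, -⟩, hdisj⟩ := hi g hg
  have hp₁x₁ : p₁ ≤ x₁ :=
    vertex_le_of_meets_tripod hdim ha₁ hb₁ hc₁ hlx₁ t1 hp₁ h1a h1b h1c m1a m1b m1c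
  have hp₂x₂ : p₂ ≤ x₂ :=
    vertex_le_of_meets_tripod hdim ha₂ hb₂ hc₂ hlx₂ t2 hp₂ h2a h2b h2c m2a m2b m2c
  have hcon : ¬ Tripod g x₁ x₂ := by
    rintro ⟨-, -, -, ⟨t, ht, htg, htx₁, htx₂⟩, htop⟩
    have htp₁ : t ≠ p₁ := fun he => hp₁g (he ▸ htg)
    have htp₂ : t ≠ p₂ := fun he => hp₂g (he ▸ htg)
    have hx₁eq : t ⊔ p₁ = x₁ := Submodule.eq_of_le_of_finrank_eq (sup_le htx₁ hp₁x₁)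
      (by rw [frk_sup_points ht hp₁ htp₁, hlx₁])
    have hx₂eq : t ⊔ p₂ = x₂ := Submodule.eq_of_le_of_finrank_eq (sup_le htx₂ hp₂x₂)
      (by rw [frk_sup_points ht hp₂ htp₂, hlx₂])
    have hx₁P : x₁ ≤ P := by
      rw [← hx₁eq]
      exact sup_le (htg.trans hgP) ((le_sup_left : p₁ ≤ W).trans hWP)
    have hx₂P : x₂ ≤ P := by
      rw [← hx₂eq]
      exact sup_le (htg.trans hgP) ((le_sup_right : p₂ ≤ W).trans hWP)
    have : (⊤ : Submodule K V) ≤ P := htop ▸ sup_le (sup_le hgP hx₁P) hx₂P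
    have : finrank K V ≤ finrank K P := by
      calc finrank K V = finrank K ↥(⊤ : Submodule K V) := (finrank_top K V).symm
      _ ≤ finrank K P := Submodule.finrank_mono this
    rw [hdim, hP] at this; omega
  rcases hdisj with (h | h) | (h | h)
  · exact hp₁g (h ▸ hp₁x₁)
  · rcases h with ⟨htr, -⟩ | ⟨-, htp⟩
    · exact not_tripod_of_triangle htr t1
    · exact hcon htp
  · exact hp₂g (h ▸ hp₂x₂)
  · rcases h with ⟨htr, -⟩ | ⟨-, htp⟩
    · exact not_tripod_of_triangle htr t2
    · exact hcon htp

end MainLemmas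
section Backward
open Module Submodule
variable {K V : Type*} [DivisionRing K] [AddCommGroup V] [Module K V]
variable [FiniteDimensional K V]
variable (hdim : Module.finrank K V = 4)
include hdim

/-- Backward case: one triangle and one tripod relate every line. -/
lemma opp_case {a b c a' b' c' g : Submodule K V}
    (ha : PLine a) (hb : PLine b) (hc : PLine c)
    (ha' : PLine a') (hb' : PLine b') (hc' : PLine c')
    (t1 : Triangle a b c) (t2 : Tripod a' b' c') (hg : PLine g) :
    ∃ x y : Submodule K V, PLine x ∧ PLine y ∧
      (PMeetsOrEq x a ∧ PMeetsOrEq x b ∧ PMeetsOrEq x c) ∧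
      (PMeetsOrEq y a' ∧ PMeetsOrEq y b' ∧ PMeetsOrEq y c') ∧
      (g = x ∨ g = y ∨ Triangle g x y) := by
  obtain ⟨hE, hcE⟩ := triangle_plane ha hb hc t1
  obtain ⟨p, hp, hpa', hpb', hpc'⟩ := t2.2.2.2.1
  by_cases hgE : g ≤ a ⊔ b
  · exact ⟨g, a', hg, ha',
      ⟨meets_of_plane hg ha hgE le_sup_left hE, meets_of_plane hg hb hgE le_sup_right hE,
        meets_of_plane hg hc hgE hcE hE⟩,
      ⟨Or.inr rfl, meets_of_point_le hp hpa' hpb', meets_of_point_le hp hpa' hpc'⟩,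
      Or.inl rfl⟩
  · by_cases hpg : p ≤ g
    · exact ⟨a, g, ha, hg,
        ⟨Or.inr rfl, Or.inl t1.2.2.2.1, Or.inl t1.2.2.2.2.1⟩,
        ⟨meets_of_point_le hp hpg hpa', meets_of_point_le hp hpg hpb',
          meets_of_point_le hp hpg hpc'⟩,
        Or.inr (Or.inl rfl)⟩
    · obtain ⟨x, y, hx, hy, hxE, hpy, htr⟩ :=
        exists_triangle_witness hdim ha hb hc t1 hp hg hgE hpg
      exact ⟨x, y, hx, hy,
        ⟨meets_of_plane hx ha hxE le_sup_left hE, meets_of_plane hx hb hxE le_sup_right hE,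
          meets_of_plane hx hc hxE hcE hE⟩,
        ⟨meets_of_point_le hp hpy hpa', meets_of_point_le hp hpy hpb',
          meets_of_point_le hp hpy hpc'⟩,
        Or.inr (Or.inr htr)⟩

end Backward

theorem statement7 {K V : Type*} [DivisionRing K] [AddCommGroup V] [Module K V]
    (hdim : Module.finrank K V = 4)
    (a₁ b₁ c₁ a₂ b₂ c₂ : Submodule K V)
    (ha₁ : PLine a₁) (hb₁ : PLine b₁) (hc₁ : PLine c₁)
    (ha₂ : PLine a₂) (hb₂ : PLine b₂) (hc₂ : PLine c₂) :
    (∀ g : Submodule K V, PLine g →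
      ∃ x₁ x₂ : Submodule K V, PLine x₁ ∧ PLine x₂ ∧
        (PMeetsOrEq x₁ a₁ ∧ PMeetsOrEq x₁ b₁ ∧ PMeetsOrEq x₁ c₁ ∧ TTriple a₁ b₁ c₁) ∧
        (PMeetsOrEq x₂ a₂ ∧ PMeetsOrEq x₂ b₂ ∧ PMeetsOrEq x₂ c₂ ∧ TTriple a₂ b₂ c₂) ∧
        ((g = x₁ ∨ SameType a₁ b₁ c₁ g x₁ x₂) ∨ (g = x₂ ∨ SameType a₂ b₂ c₂ g x₁ x₂))) ↔
    OppType a₁ b₁ c₁ a₂ b₂ c₂ := by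
  haveI : FiniteDimensional K V := Module.finite_of_finrank_eq_succ hdim
  constructor
  · intro hi
    obtain ⟨x₁, x₂, -, -, ⟨-, -, -, hT₁⟩, ⟨-, -, -, hT₂⟩, -⟩ := hi a₁ ha₁
    rcases hT₁ with t1 | t1 <;> rcases hT₂ with t2 | t2
    · exact absurd (no_both_triangles hdim ha₁ hb₁ hc₁ ha₂ hb₂ hc₂ t1 t2 hi) not_false
    · exact Or.inl ⟨t1, t2⟩
    · exact Or.inr ⟨t1, t2⟩
    · exact absurd (no_both_tripods hdim ha₁ hb₁ hc₁ ha₂ hb₂ hc₂ t1 t2 hi) not_false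
  · intro ho g hg
    rcases ho with ⟨t1, t2⟩ | ⟨t1, t2⟩
    · obtain ⟨x, y, hx, hy, ⟨m1a, m1b, m1c⟩, ⟨m2a, m2b, m2c⟩, hcase⟩ :=
        opp_case hdim ha₁ hb₁ hc₁ ha₂ hb₂ hc₂ t1 t2 hg
      refine ⟨x, y, hx, hy, ⟨m1a, m1b, m1c, Or.inl t1⟩, ⟨m2a, m2b, m2c, Or.inr t2⟩, ?_⟩
      rcases hcase with h | h | h
      · exact Or.inl (Or.inl h)
      · exact Or.inr (Or.inl h)
      · exact Or.inl (Or.inr (Or.inl ⟨t1, h⟩))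
    · obtain ⟨x, y, hx, hy, ⟨m2a, m2b, m2c⟩, ⟨m1a, m1b, m1c⟩, hcase⟩ :=
        opp_case hdim ha₂ hb₂ hc₂ ha₁ hb₁ hc₁ t2 t1 hg
      refine ⟨y, x, hy, hx, ⟨m1a, m1b, m1c, Or.inr t1⟩, ⟨m2a, m2b, m2c, Or.inl t2⟩, ?_⟩
      rcases hcase with h | h | h
      · exact Or.inr (Or.inl h)
      · exact Or.inl (Or.inl h)
      · exact Or.inr (Or.inr (Or.inl ⟨t2, h.swap⟩))
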